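/- If H is an almost symmetric numerical semigroup with e(H) = m(H) − 1, then H* is almost symmetric with t(H*) ≥ 2. -/

import Mathlib

/-- A numerical semigroup, viewed as a set of integers: a set of nonnegative
integers containing 0, closed under addition, with finite complement in ℕ. -/
def IsNumericalSemigroup (S : Set ℤ) : Prop :=
  (∀ x ∈ S, 0 ≤ x) ∧ 0 ∈ S ∧ (∀ a ∈ S, ∀ b ∈ S, a + b ∈ S) ∧
    {z : ℤ | 0 ≤ z ∧ z ∉ S}.Finite

/-- The genus: the number of nonnegative integers not in `S`. -/
noncomputable def genus (S : Set ℤ) : ℕ := {z : ℤ | 0 ≤ z ∧ z ∉ S}.ncard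

/-- The Frobenius number: the largest integer not in `S`. -/
noncomputable def frob (S : Set ℤ) : ℤ := sSup {z : ℤ | z ∉ S}

/-- The set of pseudo-Frobenius numbers. -/
def PF (S : Set ℤ) : Set ℤ := {x : ℤ | x ∉ S ∧ ∀ h ∈ S, h ≠ 0 → x + h ∈ S}

/-- The type: the number of pseudo-Frobenius numbers. -/
noncomputable def typ (S : Set ℤ) : ℕ := (PF S).ncard

/-- The multiplicity: the smallest nonzero element of `S`. -/
noncomputable def mult (S : Set ℤ) : ℤ := sInf {z : ℤ | z ∈ S ∧ z ≠ 0}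

/-- The Apéry set of `S` with respect to `n`. -/
def apery (S : Set ℤ) (n : ℤ) : Set ℤ := {s ∈ S | s - n ∉ S}

/-- The dual `H* = M - M` of the maximal ideal `M = S \ {0}`. -/
def dual (S : Set ℤ) : Set ℤ :=
  {z : ℤ | ∀ m ∈ S, m ≠ 0 → z + m ∈ S ∧ z + m ≠ 0}

/-- Almost symmetric: `2 g(S) = F(S) + t(S)`. -/
def AlmostSymmetric (S : Set ℤ) : Prop := 2 * (genus S : ℤ) = frob S + (typ S : ℤ)

/-- Symmetric: `2 g(S) = F(S) + 1`. -/
def SymmetricNS (S : Set ℤ) : Prop := 2 * (genus S : ℤ) = frob S + 1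

/-- Pseudo-symmetric: `2 g(S) = F(S) + 2`. -/
def PseudoSymmetric (S : Set ℤ) : Prop := 2 * (genus S : ℤ) = frob S + 2

/-- The set of minimal generators of `S`: nonzero elements not expressible as the
sum of two nonzero elements of `S`. -/
def minGens (S : Set ℤ) : Set ℤ :=
  {x ∈ S | x ≠ 0 ∧ ∀ a ∈ S, ∀ b ∈ S, a ≠ 0 → b ≠ 0 → x ≠ a + b}

/-- The embedding dimension: the number of minimal generators. -/
noncomputable def embdim (S : Set ℤ) : ℕ := (minGens S).ncard

/-- The gluing `⟨x S₁, y S₂⟩` of two numerical semigroups. -/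
def glue (x y : ℤ) (S₁ S₂ : Set ℤ) : Set ℤ :=
  {z : ℤ | ∃ a ∈ S₁, ∃ b ∈ S₂, z = x * a + y * b}

/-!
Let `m` be the multiplicity and `F` the Frobenius number. The minimal generators other than `m`
are the nonzero elements of the Apéry set `Ap(S, m)` that are not sums of two nonzero elements of
`S`, so `e(S) = m - 1` says that exactly one element of `Ap(S, m)` is such a sum. Almost symmetry
means that every gap `z ≥ 0` with `F - z` a gap is pseudo-Frobenius; it forces that element to be
`F + m`, and `t(S) ≤ m - 2` because `PF(S) + m ⊆ Ap(S, m) \ {0}` misses a summand of it.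

The dual is `H* = S ∪ PF(S)`, with Frobenius number `F - m` and genus `g - t`. Since `F + m` is
the only decomposable Apéry element, every gap `z` of `H*` with `F - m - z` a gap is
pseudo-Frobenius in `H*`, so `H*` is almost symmetric, of type `2 g(H*) - (F - m) = m - t ≥ 2`.
-/

open Set Pointwise

variable {S : Set ℤ} {a b f h n w x z : ℤ}

def holes (S : Set ℤ) : Set ℤ := {z | 0 ≤ z ∧ z ∉ S ∧ frob S - z ∉ S}

def decomposables (S : Set ℤ) : Set ℤ := (S \ {0}) + (S \ {0})

theorem frob_eq_of_forall_lt_mem (hx : x ∉ S) (h : ∀ z, x < z → z ∈ S) :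
    frob S = x :=
  IsGreatest.csSup_eq ⟨hx, fun _ hz => not_lt.1 fun hlt => hz (h _ hlt)⟩

theorem add_mem_dual (ha : a ∈ dual S) (hb : b ∈ dual S) : a + b ∈ dual S := by
  intro h hh hh0
  obtain ⟨hbh, hbh0⟩ := hb h hh hh0
  simpa only [add_assoc] using ha _ hbh hbh0

theorem add_mem_decomposables (ha : a ∈ S) (ha0 : a ≠ 0) (hb : b ∈ S) (hb0 : b ≠ 0) :
    a + b ∈ decomposables S :=
  add_mem_add ⟨ha, ha0⟩ ⟨hb, hb0⟩

theorem minGens_eq (S : Set ℤ) : minGens S = (S \ {0}) \ decomposables S := by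
  ext x
  refine ⟨fun ⟨hxS, hx0, hxd⟩ => ⟨⟨hxS, hx0⟩, ?_⟩, fun ⟨⟨hxS, hx0⟩, hxd⟩ => ⟨hxS, hx0, ?_⟩⟩
  · rintro ⟨a, ⟨ha, ha0⟩, b, ⟨hb, hb0⟩, hab⟩
    exact hxd a ha b hb ha0 hb0 hab.symm
  · rintro a ha b hb ha0 hb0 rfl
    exact hxd ⟨a, ⟨ha, ha0⟩, b, ⟨hb, hb0⟩, rfl⟩

theorem minGens_eq_insert (hn : n ∈ minGens S) :
    minGens S = insert n ((apery S n \ {0}) \ decomposables S) := by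
  have hmin := hn
  rw [minGens_eq] at hmin ⊢
  ext x
  refine ⟨fun ⟨⟨hxS, hx0⟩, hxd⟩ => ?_, ?_⟩
  · refine or_iff_not_imp_left.2 fun hxn => ⟨⟨⟨hxS, fun h => hxd ?_⟩, hx0⟩, hxd⟩
    simpa using add_mem_decomposables hmin.1.1 hmin.1.2 h (sub_ne_zero.2 hxn)
  · rintro (rfl | ⟨⟨⟨hxS, -⟩, hx0⟩, hxd⟩)
    exacts [hmin, ⟨⟨hxS, hx0⟩, hxd⟩]

namespace IsNumericalSemigroup

theorem nonneg (hS : IsNumericalSemigroup S) (hz : z ∈ S) : 0 ≤ z := hS.1 z hz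

theorem zero_mem (hS : IsNumericalSemigroup S) : (0 : ℤ) ∈ S := hS.2.1

theorem add_mem (hS : IsNumericalSemigroup S) (ha : a ∈ S) (hb : b ∈ S) : a + b ∈ S :=
  hS.2.2.1 a ha b hb

theorem finite_gaps (hS : IsNumericalSemigroup S) : {z : ℤ | 0 ≤ z ∧ z ∉ S}.Finite := hS.2.2.2

theorem add_mul_mem (hS : IsNumericalSemigroup S) (ha : a ∈ S) (hn : n ∈ S) {k : ℤ}
    (hk : 0 ≤ k) : a + n * k ∈ S := by
  induction k, hk using Int.leInduction with
  | base => simpa using ha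
  | succ k _ ih => simpa [mul_add, add_assoc] using hS.add_mem ih hn

theorem bddAbove_compl (hS : IsNumericalSemigroup S) : BddAbove {z : ℤ | z ∉ S} := by
  obtain ⟨B, hB⟩ := hS.finite_gaps.bddAbove
  refine ⟨max B 0, fun z hz => ?_⟩
  by_cases hz0 : 0 ≤ z
  · exact le_max_of_le_left (hB ⟨hz0, hz⟩)
  · exact le_max_of_le_right (by omega)

theorem frob_not_mem (hS : IsNumericalSemigroup S) : frob S ∉ S :=
  Int.csSup_mem ⟨-1, fun h => by have := hS.nonneg h; omega⟩ hS.bddAbove_compl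

theorem le_frob (hS : IsNumericalSemigroup S) (hz : z ∉ S) : z ≤ frob S :=
  le_csSup hS.bddAbove_compl hz

theorem mem_of_frob_lt (hS : IsNumericalSemigroup S) (hz : frob S < z) : z ∈ S :=
  by_contra fun h => (hS.le_frob h).not_gt hz

theorem isLeast_mult (hS : IsNumericalSemigroup S) : IsLeast {z | z ∈ S ∧ z ≠ 0} (mult S) := by
  have hne : {z | z ∈ S ∧ z ≠ 0}.Nonempty :=
    ⟨max (frob S + 1) 1, hS.mem_of_frob_lt (by omega), by omega⟩
  have hbdd : BddBelow {z | z ∈ S ∧ z ≠ 0} := ⟨0, fun _ hz => hS.nonneg hz.1⟩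
  exact ⟨Int.csInf_mem hne hbdd, fun _ hz => csInf_le hbdd hz⟩

theorem mult_mem (hS : IsNumericalSemigroup S) : mult S ∈ S := hS.isLeast_mult.1.1

theorem mult_ne_zero (hS : IsNumericalSemigroup S) : mult S ≠ 0 := hS.isLeast_mult.1.2

theorem mult_le (hS : IsNumericalSemigroup S) (hz : z ∈ S) (hz0 : z ≠ 0) : mult S ≤ z :=
  hS.isLeast_mult.2 ⟨hz, hz0⟩

theorem mult_pos (hS : IsNumericalSemigroup S) : 0 < mult S :=
  lt_of_le_of_ne (hS.nonneg hS.mult_mem) hS.mult_ne_zero.symm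

theorem frob_mem_PF (hS : IsNumericalSemigroup S) : frob S ∈ PF S :=
  ⟨hS.frob_not_mem, fun _ hh hh0 => hS.mem_of_frob_lt (by have := hS.nonneg hh; omega)⟩

theorem PF_sdiff_frob_subset_holes (hS : IsNumericalSemigroup S) :
    PF S \ {frob S} ⊆ holes S := by
  rintro f ⟨⟨hfS, hf⟩, hfF⟩
  have hFf : frob S - f ∉ S := fun h =>
    hS.frob_not_mem (by simpa using hf _ h (sub_ne_zero.2 (Ne.symm hfF)))
  exact ⟨not_lt.1 fun hf0 => hFf (hS.mem_of_frob_lt (by omega)), hfS, hFf⟩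

theorem frob_not_mem_holes (hS : IsNumericalSemigroup S) : frob S ∉ holes S :=
  fun h => h.2.2 (by simpa using hS.zero_mem)

theorem finite_holes (hS : IsNumericalSemigroup S) : (holes S).Finite :=
  hS.finite_gaps.subset fun _ hz => ⟨hz.1, hz.2.1⟩

theorem finite_PF (hS : IsNumericalSemigroup S) : (PF S).Finite :=
  (hS.finite_holes.insert (frob S)).subset fun f hf =>
    (eq_or_ne f (frob S)).elim Or.inl fun hfF => Or.inr (hS.PF_sdiff_frob_subset_holes ⟨hf, hfF⟩)

theorem PF_nonneg (hS : IsNumericalSemigroup S) (hF : 0 ≤ frob S) (hf : f ∈ PF S) : 0 ≤ f := by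
  obtain rfl | hfF := eq_or_ne f (frob S)
  · exact hF
  · exact (hS.PF_sdiff_frob_subset_holes ⟨hf, hfF⟩).1

/-- The gaps `z` with `F - z ∈ S` correspond to `S ∩ [0, F]` under `z ↦ F - z`; the other
gaps are the holes. -/
theorem two_mul_genus (hS : IsNumericalSemigroup S) :
    2 * (genus S : ℤ) = frob S + 1 + (holes S).ncard := by
  set F := frob S
  set G := {z : ℤ | 0 ≤ z ∧ z ∉ S}
  have hG : G = Icc 0 F \ S := by
    ext z
    exact ⟨fun hz => ⟨⟨hz.1, hS.le_frob hz.2⟩, hz.2⟩, fun hz => ⟨hz.1.1, hz.2⟩⟩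
  have hholes : G \ {z | F - z ∈ S} = holes S := by
    ext z
    exact and_assoc
  have hmirror : (fun z => F - z) '' (Icc 0 F ∩ S) = G ∩ {z | F - z ∈ S} := by
    ext w
    constructor
    · rintro ⟨z, ⟨⟨hz0, hzF⟩, hzS⟩, rfl⟩
      dsimp only
      refine ⟨⟨by omega, fun h => hS.frob_not_mem ?_⟩, by simpa using hzS⟩
      simpa using hS.add_mem hzS h
    · rintro ⟨⟨hw0, hwS⟩, hFw⟩
      exact ⟨F - w, ⟨⟨by linarith [hS.le_frob hwS], by omega⟩, hFw⟩, by ring⟩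
  have hF : -1 ≤ F := hS.le_frob fun h => by have := hS.nonneg h; omega
  have hIcc : ((Icc 0 F).ncard : ℤ) = F + 1 := by
    rw [← Finset.coe_Icc, ncard_coe_finset, Int.card_Icc]
    omega
  have hsplitIcc := ncard_inter_add_ncard_sdiff_eq_ncard (Icc 0 F) S (finite_Icc 0 F)
  have hsplitG := ncard_inter_add_ncard_sdiff_eq_ncard G {z | F - z ∈ S} hS.finite_gaps
  rw [hholes, ← hmirror, ncard_image_of_injective _ sub_right_injective] at hsplitG
  rw [← hG] at hsplitIcc
  change 2 * (G.ncard : ℤ) = _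
  omega

theorem almostSymmetric_iff_holes_subset_PF (hS : IsNumericalSemigroup S) :
    AlmostSymmetric S ↔ holes S ⊆ PF S := by
  have htyp : typ S = (PF S \ {frob S}).ncard + 1 :=
    (ncard_sdiff_singleton_add_one hS.frob_mem_PF hS.finite_PF).symm
  rw [AlmostSymmetric, hS.two_mul_genus, htyp]
  constructor
  · intro h
    have : PF S \ {frob S} = holes S :=
      eq_of_subset_of_ncard_le hS.PF_sdiff_frob_subset_holes (by push_cast at h; omega)
        hS.finite_holes
    exact this ▸ sdiff_subset
  · intro h
    have : PF S \ {frob S} = holes S := hS.PF_sdiff_frob_subset_holes.antisymm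
      fun z hz => ⟨h hz, fun hzF => hS.frob_not_mem_holes (hzF ▸ hz)⟩
    rw [this]
    push_cast
    ring

theorem dual_eq_union_PF (hS : IsNumericalSemigroup S) (hF : 0 ≤ frob S) :
    dual S = S ∪ PF S := by
  ext z
  constructor
  · intro hz
    by_cases hzS : z ∈ S
    · exact Or.inl hzS
    · exact Or.inr ⟨hzS, fun h hh hh0 => (hz h hh hh0).1⟩
  · rintro (hz | hz) h hh hh0
    · have := hS.nonneg hz
      have := hS.nonneg hh
      exact ⟨hS.add_mem hz hh, by omega⟩
    · have := hS.PF_nonneg hF hz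
      have := hS.nonneg hh
      exact ⟨hz.2 h hh hh0, by omega⟩

theorem isNumericalSemigroup_dual (hS : IsNumericalSemigroup S) (hF : 0 ≤ frob S) :
    IsNumericalSemigroup (dual S) := by
  refine ⟨?_, ?_, fun a ha b hb => add_mem_dual ha hb, ?_⟩ <;> rw [hS.dual_eq_union_PF hF]
  · rintro z (hz | hz)
    exacts [hS.nonneg hz, hS.PF_nonneg hF hz]
  · exact Or.inl hS.zero_mem
  · exact hS.finite_gaps.subset fun z hz => ⟨hz.1, fun h => hz.2 (Or.inl h)⟩

theorem genus_dual (hS : IsNumericalSemigroup S) (hF : 0 ≤ frob S) :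
    (genus (dual S) : ℤ) = genus S - typ S := by
  have hPF : PF S ⊆ {z | 0 ≤ z ∧ z ∉ S} := fun f hf => ⟨hS.PF_nonneg hF hf, hf.1⟩
  have hgaps : {z | 0 ≤ z ∧ z ∉ dual S} = {z | 0 ≤ z ∧ z ∉ S} \ PF S := by
    ext z
    simp only [hS.dual_eq_union_PF hF, mem_ofPred_eq, mem_union, mem_sdiff, not_or, and_assoc]
  have := ncard_sdiff_add_ncard_of_subset hPF hS.finite_gaps
  rw [genus, genus, typ, hgaps]
  omega

theorem frob_dual (hS : IsNumericalSemigroup S) (hF : 0 ≤ frob S) (hholes : holes S ⊆ PF S) :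
    frob (dual S) = frob S - mult S := by
  rw [hS.dual_eq_union_PF hF]
  have hm := hS.mult_mem
  refine frob_eq_of_forall_lt_mem ?_ fun z hz => ?_
  · rintro (h | h)
    · exact hS.frob_not_mem (by simpa using hS.add_mem h hm)
    · exact hS.frob_not_mem (by simpa using h.2 _ hm hS.mult_ne_zero)
  by_cases hzS : z ∈ S
  · exact Or.inl hzS
  obtain rfl | hzF := eq_or_ne z (frob S)
  · exact Or.inr hS.frob_mem_PF
  have hFz : frob S - z ∉ S := fun h => by
    have := hS.mult_le h (sub_ne_zero.2 (Ne.symm hzF))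
    omega
  have hz0 : 0 ≤ z := not_lt.1 fun hz0 => hFz (hS.mem_of_frob_lt (by omega))
  exact Or.inr (hholes ⟨hz0, hzS, hFz⟩)

theorem finite_apery (hS : IsNumericalSemigroup S) (n : ℤ) : (apery S n).Finite :=
  (finite_Icc 0 (frob S + n)).subset fun w hw =>
    ⟨hS.nonneg hw.1, by linarith [hS.le_frob hw.2]⟩

theorem le_of_mem_apery_of_modEq (hS : IsNumericalSemigroup S) (hn : n ∈ S) (hb : b ∈ apery S n)
    (ha : a ∈ S) (hab : b ≡ a [ZMOD n]) : b ≤ a := by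
  by_contra! hlt
  obtain ⟨k, hk⟩ := hab.symm.dvd
  have hn0 := hS.nonneg hn
  have hk1 : 1 ≤ k := by nlinarith
  apply hb.2
  rw [show b - n = a + n * (k - 1) by linear_combination hk]
  exact hS.add_mul_mem ha hn (by omega)

/-- `Ap(S, n)` consists of the least element of `S` in each residue class mod `n`. -/
theorem ncard_apery (hS : IsNumericalSemigroup S) (hn : n ∈ S) (hn0 : 0 < n) :
    (apery S n).ncard = n.toNat := by
  have hbij : BijOn (· % n) (apery S n) (Ico 0 n) := by
    refine ⟨fun w _ => ⟨Int.emod_nonneg w hn0.ne', Int.emod_lt_of_pos w hn0⟩, ?_, ?_⟩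
    · intro a ha b hb hab
      exact le_antisymm (hS.le_of_mem_apery_of_modEq hn ha hb.1 hab)
        (hS.le_of_mem_apery_of_modEq hn hb ha.1 hab.symm)
    · rintro r ⟨hr0, hrn⟩
      have hlarge : |frob S| + 1 ≤ n * (|frob S| + 1) :=
        le_mul_of_one_le_left (by positivity) (by omega)
      obtain ⟨w, ⟨hwS, hwr⟩, hwmin⟩ :=
        Int.exists_least_of_bdd (P := fun z => z ∈ S ∧ z ≡ r [ZMOD n])
          ⟨0, fun z hz => hS.nonneg hz.1⟩
          ⟨r + n * (|frob S| + 1), hS.mem_of_frob_lt (by linarith [le_abs_self (frob S)]),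
            by simp [Int.ModEq]⟩
      refine ⟨w, ⟨hwS, fun h => ?_⟩, by simpa [Int.ModEq, Int.emod_eq_of_lt hr0 hrn] using hwr⟩
      have := hwmin (w - n) ⟨h, by simpa [Int.ModEq] using hwr⟩
      omega
  rw [← hbij.injOn.ncard_image, hbij.image_eq, ← Finset.coe_Ico, ncard_coe_finset, Int.card_Ico,
    sub_zero]

theorem zero_mem_apery (hS : IsNumericalSemigroup S) (hn0 : 0 < n) : (0 : ℤ) ∈ apery S n :=
  ⟨hS.zero_mem, fun h => by linarith [hS.nonneg h]⟩

theorem ncard_apery_sdiff_zero (hS : IsNumericalSemigroup S) (hn : n ∈ S) (hn0 : 0 < n) :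
    (apery S n \ {0}).ncard + 1 = n.toNat := by
  rw [ncard_sdiff_singleton_add_one (hS.zero_mem_apery hn0) (hS.finite_apery n),
    hS.ncard_apery hn hn0]

theorem two_mul_mult_le_of_mem_decomposables (hS : IsNumericalSemigroup S)
    (hw : w ∈ decomposables S) : 2 * mult S ≤ w := by
  obtain ⟨a, ⟨ha, ha0⟩, b, ⟨hb, hb0⟩, rfl⟩ := hw
  linarith [hS.mult_le ha ha0, hS.mult_le hb hb0]

theorem mult_mem_minGens (hS : IsNumericalSemigroup S) : mult S ∈ minGens S := by
  refine ⟨hS.mult_mem, hS.mult_ne_zero, fun a ha b hb ha0 hb0 hab => ?_⟩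
  linarith [hS.mult_le ha ha0, hS.mult_le hb hb0, hS.mult_pos]

theorem embdim_add_ncard_apery_inter_decomposables (hS : IsNumericalSemigroup S)
    (hn : n ∈ minGens S) : embdim S + (apery S n ∩ decomposables S).ncard = n.toNat := by
  have hn0 : 0 < n := lt_of_le_of_ne (hS.nonneg hn.1) (Ne.symm hn.2.1)
  have hfin := (hS.finite_apery n).sdiff (t := {0})
  have hnA : n ∉ (apery S n \ {0}) \ decomposables S := fun h =>
    h.1.1.2 (by simpa using hS.zero_mem)
  have hdec : (apery S n \ {0}) ∩ decomposables S = apery S n ∩ decomposables S := by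
    refine (inter_subset_inter_left _ sdiff_subset).antisymm fun w ⟨hwA, hwd⟩ => ⟨⟨hwA, ?_⟩, hwd⟩
    have := hS.two_mul_mult_le_of_mem_decomposables hwd
    have := hS.mult_pos
    rintro rfl
    omega
  have hsplit := ncard_inter_add_ncard_sdiff_eq_ncard _ (decomposables S) hfin
  rw [embdim, minGens_eq_insert hn, ncard_insert_of_notMem hnA hfin.sdiff, ← hdec,
    ← hS.ncard_apery_sdiff_zero hn.1 hn0]
  omega

theorem frob_add_mult_mem_apery (hS : IsNumericalSemigroup S) :
    frob S + mult S ∈ apery S (mult S) :=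
  ⟨hS.mem_of_frob_lt (by linarith [hS.mult_pos]), by simpa using hS.frob_not_mem⟩

theorem exists_mem_apery_sub_not_mem_union_PF (hS : IsNumericalSemigroup S)
    (hw : w ∈ apery S n ∩ decomposables S) : ∃ a ∈ apery S n, a ≠ 0 ∧ a - n ∉ S ∪ PF S := by
  obtain ⟨⟨-, hwn⟩, a, ⟨ha, ha0⟩, b, ⟨hb, hb0⟩, rfl⟩ := hw
  have hab : a + b - n = a - n + b := by ring
  refine ⟨a, ⟨ha, fun h => hwn ?_⟩, ha0, ?_⟩
  · exact hab ▸ hS.add_mem h hb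
  · rintro (h | h)
    exacts [hwn (hab ▸ hS.add_mem h hb), hwn (hab ▸ h.2 b hb hb0)]

theorem frob_add_mult_mem_decomposables (hS : IsNumericalSemigroup S) (hholes : holes S ⊆ PF S)
    (ha : a ∈ apery S (mult S)) (ha0 : a ≠ 0) (haPF : a - mult S ∉ PF S) :
    frob S + mult S ∈ decomposables S := by
  have hx0 : 0 ≤ a - mult S := by linarith [hS.mult_le ha.1 ha0]
  have hFx : frob S - (a - mult S) ∈ S := by_contra fun h => haPF (hholes ⟨hx0, ha.2, h⟩)
  have hFx0 : frob S - (a - mult S) ≠ 0 := fun h => haPF (sub_eq_zero.1 h ▸ hS.frob_mem_PF)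
  convert add_mem_decomposables ha.1 ha0 hFx hFx0 using 1
  ring

theorem apery_inter_decomposables_eq (hS : IsNumericalSemigroup S) (hholes : holes S ⊆ PF S)
    (he : (embdim S : ℤ) = mult S - 1) :
    apery S (mult S) ∩ decomposables S = {frob S + mult S} := by
  have hcard := hS.embdim_add_ncard_apery_inter_decomposables hS.mult_mem_minGens
  have hm := hS.mult_pos
  obtain ⟨u, hu⟩ := ncard_eq_one.1 (by omega : (apery S (mult S) ∩ decomposables S).ncard = 1)
  obtain ⟨a, ha, ha0, haPF⟩ := hS.exists_mem_apery_sub_not_mem_union_PF (hu ▸ mem_singleton u)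
  have hFm : frob S + mult S ∈ apery S (mult S) ∩ decomposables S :=
    ⟨hS.frob_add_mult_mem_apery,
      hS.frob_add_mult_mem_decomposables hholes ha ha0 fun h => haPF (Or.inr h)⟩
  rw [hu] at hFm ⊢
  rw [mem_singleton_iff.1 hFm]

theorem typ_add_two_le_mult (hS : IsNumericalSemigroup S) (hF : 0 ≤ frob S)
    (hw : w ∈ apery S (mult S) ∩ decomposables S) : (typ S : ℤ) + 2 ≤ mult S := by
  obtain ⟨a, ha, ha0, haPF⟩ := hS.exists_mem_apery_sub_not_mem_union_PF hw
  have hsub : (· + mult S) '' PF S ⊆ (apery S (mult S) \ {0}) \ {a} := by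
    rintro _ ⟨f, hf, rfl⟩
    have := hS.PF_nonneg hF hf
    have := hS.mult_pos
    refine ⟨⟨⟨hf.2 _ hS.mult_mem hS.mult_ne_zero, by simpa using hf.1⟩,
      show f + mult S ≠ 0 by omega⟩, ?_⟩
    rintro rfl
    exact haPF (Or.inr (by simpa using hf))
  have hfin := (hS.finite_apery (mult S)).sdiff (t := {0})
  have hle := ncard_le_ncard hsub hfin.sdiff
  have ha' := ncard_sdiff_singleton_add_one (show a ∈ apery S (mult S) \ {0} from ⟨ha, ha0⟩) hfin
  have hAp := hS.ncard_apery_sdiff_zero hS.mult_mem hS.mult_pos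
  have himage : ((· + mult S) '' PF S).ncard = typ S :=
    ncard_image_of_injective _ (add_left_injective _)
  omega

theorem add_mem_or_eq_frob (hS : IsNumericalSemigroup S)
    (hA : apery S (mult S) ∩ decomposables S = {frob S + mult S}) (hx : 0 ≤ x)
    (hxm : x + mult S ∈ S) (hh : h ∈ S) (hh0 : h ≠ 0) : x + h ∈ S ∨ x + h = frob S := by
  refine or_iff_not_imp_left.2 fun hxh => ?_
  have hw : x + mult S + h ∈ apery S (mult S) ∩ decomposables S :=
    ⟨⟨hS.add_mem hxm hh, by rwa [add_right_comm, add_sub_cancel_right]⟩,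
      add_mem_decomposables hxm (by linarith [hS.mult_pos]) hh hh0⟩
  rw [hA, mem_singleton_iff] at hw
  linarith

theorem holes_dual_subset_PF_dual (hS : IsNumericalSemigroup S) (hF : 0 ≤ frob S)
    (hholes : holes S ⊆ PF S) (hA : apery S (mult S) ∩ decomposables S = {frob S + mult S}) :
    holes (dual S) ⊆ PF (dual S) := by
  rintro x ⟨hx0, hxD, hyD⟩
  rw [hS.frob_dual hF hholes, hS.dual_eq_union_PF hF] at *
  have hxm : x + mult S ∈ S := by_contra fun h => by
    have hy : frob S - mult S - x ∈ holes S :=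
      ⟨by linarith [hS.le_frob h], fun h' => hyD (Or.inl h'),
        by rwa [sub_sub, sub_sub_cancel, add_comm]⟩
    exact hyD (Or.inr (hholes hy))
  refine ⟨hxD, ?_⟩
  rintro b (hb | hb) hb0
  · rcases hS.add_mem_or_eq_frob hA hx0 hxm hb hb0 with h | h
    exacts [Or.inl h, Or.inr (h ▸ hS.frob_mem_PF)]
  by_cases hxb : x + b ∈ S
  · exact Or.inl hxb
  refine Or.inr ⟨hxb, fun h hh hh0 => ?_⟩
  rcases hS.add_mem_or_eq_frob hA hx0 hxm hh hh0 with hxh | hxh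
  · have := hb.2 _ hxh (by linarith [hS.nonneg hh, hS.mult_le hh hh0, hS.mult_pos])
    rwa [add_left_comm, ← add_assoc] at this
  · have := hS.PF_nonneg hF hb
    exact hS.mem_of_frob_lt (by omega)

end IsNumericalSemigroup

theorem stmt14 (S : Set ℤ) (hS : IsNumericalSemigroup S)
    (halm : AlmostSymmetric S) (he : (embdim S : ℤ) = mult S - 1) :
    AlmostSymmetric (dual S) ∧ 2 ≤ typ (dual S) := by
  have hholes := hS.almostSymmetric_iff_holes_subset_PF.1 halm
  have hA := hS.apery_inter_decomposables_eq hholes he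
  have hFm : frob S + mult S ∈ apery S (mult S) ∩ decomposables S := hA ▸ rfl
  have hF : 0 ≤ frob S := by
    linarith [hS.two_mul_mult_le_of_mem_decomposables hFm.2, hS.mult_pos]
  have halmD : AlmostSymmetric (dual S) :=
    (hS.isNumericalSemigroup_dual hF).almostSymmetric_iff_holes_subset_PF.2
      (hS.holes_dual_subset_PF_dual hF hholes hA)
  refine ⟨halmD, ?_⟩
  have htyp := hS.typ_add_two_le_mult hF hFm
  have hgenus := hS.genus_dual hF
  have hfrob := hS.frob_dual hF hholes
  unfold AlmostSymmetric at halm halmD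
  omega
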